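/- Let G be a finite simple d-regular graph with n ≥ 2 vertices. Then wd(G) ≥ d − √(2n), where wd(G) denotes the weak degeneracy of G (the inequality is between real numbers, with wd(G) cast into the reals). -/

import Mathlib

/-!
Suppose all vertices of `G` can be removed starting from the constant function `k`, and let
`ℓ u` be the number of vertices removed after `u`. At least `deg u - ℓ u` neighbours of `u` are
removed before it, each costing `u` one unit of its value unless the move is a `DelSave` saving
`u`, and there are at most `n` such moves. Hence `∑ᵤ max 0 (deg u - ℓ u - k) ≤ n` (`deficit`).
When `G` is `d`-regular the ranks `ℓ u` run through `0, …, n - 1`, so with `c = d - k`,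
`c (c + 1) / 2 ≤ ∑_{j < n} max 0 (c - j) ≤ n`, whence `c ≤ √(2n)`.
-/

open scoped Classical

namespace WeakDeg

variable {V : Type*}

/-- `WeakDegenOn G S f` means: starting from the induced subgraph `G[S]` of `G` with value
function `f`, it is possible to remove all vertices by a sequence of legal applications of the
operations `Delete` and `DelSave`. `Delete(u)` removes `u` and decreases by one the value of
every remaining neighbor of `u`; it is legal if the resulting function is nonnegative on the
remaining vertices. `DelSave(u, w)` (for `w` a neighbor of `u` with `f w < f u`) removes `u` and
decreases by one the value of every remaining neighbor of `u` except `w`; it is legal if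
`f w < f u` and the resulting function is nonnegative on the remaining vertices. -/
inductive WeakDegenOn (G : SimpleGraph V) : Finset V → (V → ℤ) → Prop
  | empty (f : V → ℤ) : WeakDegenOn G ∅ f
  | delete (S : Finset V) (f : V → ℤ) (u : V) (hu : u ∈ S)
      (hleg : ∀ v ∈ S.erase u, 0 ≤ if G.Adj u v then f v - 1 else f v)
      (h : WeakDegenOn G (S.erase u) fun v => if G.Adj u v then f v - 1 else f v) :
      WeakDegenOn G S f
  | delSave (S : Finset V) (f : V → ℤ) (u w : V) (hu : u ∈ S) (hw : w ∈ S)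
      (hadj : G.Adj u w) (hlt : f w < f u)
      (hleg : ∀ v ∈ S.erase u, 0 ≤ if G.Adj u v ∧ v ≠ w then f v - 1 else f v)
      (h : WeakDegenOn G (S.erase u) fun v => if G.Adj u v ∧ v ≠ w then f v - 1 else f v) :
      WeakDegenOn G S f

/-- `G` is weakly `f`-degenerate, for `f : V → ℕ`. -/
def WeaklyDegenerateWith (G : SimpleGraph V) [Fintype V] (f : V → ℕ) : Prop :=
  WeakDegenOn G Finset.univ fun v => (f v : ℤ)

/-- `G` is weakly `d`-degenerate. -/
def WeaklyDegenerate (G : SimpleGraph V) [Fintype V] (d : ℕ) : Prop :=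
  WeaklyDegenerateWith G fun _ => d

/-- The weak degeneracy `wd(G)` of `G`: the least `d` such that `G` is weakly `d`-degenerate. -/
noncomputable def weakDegeneracy (G : SimpleGraph V) [Fintype V] : ℕ :=
  sInf {d : ℕ | WeaklyDegenerate G d}

open Finset

variable {G : SimpleGraph V}

theorem WeakDegenOn.of_card_le_add_one {S : Finset V} {f : V → ℤ}
    (hf : ∀ v ∈ S, (#S : ℤ) ≤ f v + 1) : WeakDegenOn G S f := by
  induction S using Finset.strongInduction generalizing f with
  | _ S ih =>
    rcases S.eq_empty_or_nonempty with rfl | ⟨u, hu⟩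
    · exact .empty f
    have hcard : #(S.erase u) + 1 = #S := card_erase_add_one hu
    refine .delete S f u hu (fun v hv => ?_) (ih _ (erase_ssubset hu) fun v hv => ?_)
    all_goals
      have hfv := hf v (mem_of_mem_erase hv)
      have hpos : 0 < #(S.erase u) := card_pos.2 ⟨v, hv⟩
      split_ifs <;> omega

theorem weaklyDegenerate_card [Fintype V] : WeaklyDegenerate G (Fintype.card V) :=
  WeakDegenOn.of_card_le_add_one fun _ _ => by simp

theorem weaklyDegenerate_weakDegeneracy [Fintype V] : WeaklyDegenerate G (weakDegeneracy G) :=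
  Nat.sInf_mem (s := {d | WeaklyDegenerate G d}) ⟨_, weaklyDegenerate_card⟩

def IsRanking (S : Finset V) (ℓ : V → ℕ) : Prop :=
  Set.InjOn ℓ S ∧ ∀ v ∈ S, ℓ v < #S

theorem IsRanking.insert_update {T : Finset V} {u : V} {ℓ : V → ℕ} (hu : u ∉ T)
    (h : IsRanking T ℓ) : IsRanking (insert u T) (Function.update ℓ u #T) := by
  have heq : Set.EqOn (Function.update ℓ u #T) ℓ T :=
    fun v hv => Function.update_of_ne (ne_of_mem_of_not_mem hv hu) _ _
  refine ⟨?_, fun v hv => ?_⟩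
  · rw [coe_insert, Set.injOn_insert (by simpa using hu), heq.injOn_iff]
    refine ⟨h.1, fun ⟨v, hv, hvu⟩ => ?_⟩
    rw [heq hv, Function.update_self] at hvu
    exact (h.2 v hv).ne hvu
  · rw [card_insert_of_notMem hu]
    rcases mem_insert.1 hv with rfl | hv
    · simp
    · rw [heq hv]
      exact (h.2 v hv).trans (Nat.lt_succ_self _)

theorem IsRanking.sum_comp {M : Type*} [AddCommMonoid M] {S : Finset V} {ℓ : V → ℕ}
    (h : IsRanking S ℓ) (φ : ℕ → M) : ∑ v ∈ S, φ (ℓ v) = ∑ j ∈ range #S, φ j := by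
  have hmaps : ∀ v ∈ S, ℓ v ∈ range #S := fun v hv => mem_range.2 (h.2 v hv)
  exact sum_nbij ℓ hmaps h.1 (surjOn_of_injOn_of_card_le ℓ hmaps h.1 (by simp)) fun _ _ => rfl

noncomputable def deficit (G : SimpleGraph V) (S : Finset V) (ℓ : V → ℕ) (f : V → ℤ) : ℤ :=
  ∑ u ∈ S, max 0 (#(S.filter (G.Adj u)) - ℓ u - f u)

theorem card_filter_adj_insert {T : Finset V} {u : V} (hu : u ∉ T) (v : V) :
    (#((insert u T).filter (G.Adj v)) : ℤ) =
      #(T.filter (G.Adj v)) + if G.Adj u v then 1 else 0 := by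
  rw [filter_insert]
  split_ifs with h h' h'
  · rw [card_insert_of_notMem fun h'' => hu (mem_filter.1 h'').1]; push_cast; rfl
  · exact absurd h.symm h'
  · exact absurd h'.symm h
  · simp

theorem deficit_insert_update_le {T : Finset V} {u : V} (hu : u ∉ T) {f g e : V → ℤ}
    (hfu : 0 ≤ f u) (he : ∀ v ∈ T, 0 ≤ e v)
    (hfg : ∀ v ∈ T, g v + (if G.Adj u v then 1 else 0) ≤ f v + e v) (ℓ : V → ℕ) :
    deficit G (insert u T) (Function.update ℓ u #T) f ≤ deficit G T ℓ g + ∑ v ∈ T, e v := by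
  have hdeg : #((insert u T).filter (G.Adj u)) ≤ #T := by
    rw [filter_insert, if_neg (G.irrefl (v := u))]
    exact card_filter_le _ _
  rw [deficit, sum_insert hu, deficit, ← sum_add_distrib, Function.update_self,
    max_eq_left (by omega), zero_add]
  refine sum_le_sum fun v hv => ?_
  rw [Function.update_of_ne (ne_of_mem_of_not_mem hv hu), card_filter_adj_insert hu]
  have := hfg v hv
  have := he v hv
  omega

/-- `e v` is what a `DelSave` move gives back to the saved vertex `v`. -/
theorem exists_ranking_insert {T : Finset V} {u : V} (hu : u ∉ T) {f g e : V → ℤ}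
    (hfu : 0 ≤ f u) (he : ∀ v ∈ T, 0 ≤ e v)
    (hfg : ∀ v ∈ T, g v + (if G.Adj u v then 1 else 0) ≤ f v + e v)
    (he_sum : ∑ v ∈ T, e v ≤ 1) (h : ∃ ℓ, IsRanking T ℓ ∧ deficit G T ℓ g ≤ #T) :
    ∃ ℓ, IsRanking (insert u T) ℓ ∧ deficit G (insert u T) ℓ f ≤ #(insert u T) := by
  obtain ⟨ℓ, hℓ, hdef⟩ := h
  refine ⟨Function.update ℓ u #T, hℓ.insert_update hu, ?_⟩
  have := deficit_insert_update_le hu hfu he hfg ℓ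
  rw [card_insert_of_notMem hu]
  push_cast
  omega

theorem WeakDegenOn.exists_ranking_deficit_le {S : Finset V} {f : V → ℤ}
    (h : WeakDegenOn G S f) (hf : ∀ v ∈ S, 0 ≤ f v) :
    ∃ ℓ, IsRanking S ℓ ∧ deficit G S ℓ f ≤ #S := by
  induction h with
  | empty f => exact ⟨0, ⟨by simp, by simp⟩, by simp [deficit]⟩
  | delete S f u hu hleg _ ih =>
    rw [← insert_erase hu]
    exact exists_ranking_insert (notMem_erase u S) (hf u hu) (e := 0) (fun _ _ => le_rfl)
      (fun v _ => by split_ifs <;> simp) (by simp) (ih hleg)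
  | delSave S f u w hu hw hadj _ hleg _ ih =>
    have hw' : w ∈ S.erase u := mem_erase.2 ⟨hadj.ne.symm, hw⟩
    rw [← insert_erase hu]
    exact exists_ranking_insert (notMem_erase u S) (hf u hu)
      (e := fun v => if v = w then 1 else 0) (fun _ _ => by split_ifs <;> simp)
      (fun v _ => by split_ifs <;> simp_all) (by rw [sum_ite_eq' _ _ _, if_pos hw']) (ih hleg)

theorem sum_range_sub_mul_two (t : ℕ) : (∑ j ∈ range t, ((t : ℤ) - j)) * 2 = t * (t + 1) := by
  induction t with
  | zero => simp
  | succ t ih =>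
    rw [sum_range_succ']
    push_cast at ih ⊢
    simp only [add_sub_add_right_eq_sub]
    linarith

theorem le_sqrt_of_sum_range_max_sub_le {n : ℕ} (hn : 1 ≤ n) {c : ℤ}
    (h : ∑ j ∈ range n, max 0 (c - j) ≤ n) : (c : ℝ) ≤ √(2 * n) := by
  rcases le_or_gt c 0 with hc | hc
  · exact (Int.cast_nonpos.2 hc).trans (Real.sqrt_nonneg _)
  have hcn : c ≤ n := by
    by_contra! hcn
    have : ∑ j ∈ range n, (2 : ℤ) ≤ ∑ j ∈ range n, max 0 (c - j) :=
      sum_le_sum fun j hj => le_max_of_le_right (by have := mem_range.1 hj; omega)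
    rw [sum_const, card_range, nsmul_eq_mul] at this
    omega
  lift c to ℕ using hc.le
  have hgauss := sum_range_sub_mul_two c
  have hle : ∑ j ∈ range c, ((c : ℤ) - j) ≤ ∑ j ∈ range n, max 0 ((c : ℤ) - j) :=
    (sum_le_sum fun j _ => le_max_right _ _).trans
      (sum_le_sum_of_subset_of_nonneg (range_subset_range.2 (by omega))
        fun _ _ _ => le_max_left _ _)
  have hsq : (c : ℤ) ^ 2 ≤ 2 * n := by nlinarith
  apply Real.le_sqrt_of_sq_le
  exact_mod_cast hsq

/-- If `G` is a `d`-regular graph with `n ≥ 2` vertices, then `wd(G) ≥ d - √(2n)`. -/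
theorem weakDegeneracy_lower_bound_regular {V : Type*} [Fintype V] (G : SimpleGraph V)
    [DecidableRel G.Adj] (d : ℕ) (hn : 2 ≤ Fintype.card V) (hreg : G.IsRegularOfDegree d) :
    (d : ℝ) - Real.sqrt (2 * Fintype.card V) ≤ (weakDegeneracy G : ℝ) := by
  obtain ⟨ℓ, hℓ, hdef⟩ := WeakDegenOn.exists_ranking_deficit_le
    (weaklyDegenerate_weakDegeneracy (G := G)) fun _ _ => Int.natCast_nonneg _
  have hdeg (u : V) : #(univ.filter (G.Adj u)) = d := by
    rw [← hreg u, ← SimpleGraph.card_neighborFinset_eq_degree,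
      SimpleGraph.neighborFinset_eq_filter]
  have hsum : ∑ j ∈ range (Fintype.card V), max 0 (((d : ℤ) - weakDegeneracy G) - j) ≤
      Fintype.card V := by
    rw [← card_univ, ← hℓ.sum_comp fun j => max 0 (((d : ℤ) - weakDegeneracy G) - j)]
    refine le_of_eq_of_le (sum_congr rfl fun u _ => ?_) hdef
    rw [sub_right_comm, ← hdeg u]
    -- `deficit` counts neighbours with the classical instance, `hdeg` with the given one
    congr
  have := le_sqrt_of_sum_range_max_sub_le (by omega) hsum
  push_cast at this
  linarith

end WeakDeg
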